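/- arXiv:math/9809128 — 2 statements merged into one kernel-verified Lean document; each statement's English description precedes it below -/
import Mathlib

section
/- Let K be a field, V a K-vector space, ∇ : V → V a K-linear map, T_1,…,T_m pairwise distinct nonzero elements of K, and H_1,…,H_m ∈ V with ∇H_i = T_i·H_i for each i. Set Φ_μ := Σ_{j=1}^{m} (∏_{s≠j}(1 − T_j/T_s))^{-1}·H_j and Φ⁽ᵏ⁾ := (−∇)^{m−k}Φ_μ for 1 ≤ k ≤ m. Then ∇( Σ_{k=1}^{m} e_{m+1−k}(1/T_1,…,1/T_m)·Φ⁽ᵏ⁾ ) = Φ_μ. -/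
/-- The elementary symmetric function `e_r` of the family `(f i)_{i ∈ s}`,
with the conventions `e_0 = 1` and `e_r = 0` for `r > #s`. -/
def esym {ι : Type*} [DecidableEq ι] {K : Type*} [CommRing K]
    (s : Finset ι) (f : ι → K) (r : ℕ) : K :=
  ∑ A ∈ s.powersetCard r, ∏ i ∈ A, f i

lemma esym_gen {ι : Type*} [DecidableEq ι] {K : Type*} [CommRing K]
    (s : Finset ι) (f : ι → K) (x : K) :
    ∑ r ∈ Finset.range (s.card + 1), esym s f r * x ^ r = ∏ i ∈ s, (1 + x * f i) := by
  simp_rw [add_comm (1 : K)]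
  rw [Finset.prod_add, Finset.sum_powerset]
  refine Finset.sum_congr rfl fun r hr => ?_
  rw [esym, Finset.sum_mul]
  refine Finset.sum_congr rfl fun A hA => ?_
  have hcard : A.card = r := (Finset.mem_powersetCard.mp hA).2
  simp [Finset.prod_mul_distrib, ← hcard, mul_comm]

lemma key {K : Type*} [Field K] (m : ℕ) (T : Fin m → K) (hT0 : ∀ i, T i ≠ 0) (j : Fin m) :
    ∑ k : Fin m, esym Finset.univ (fun i => (T i)⁻¹) (m - (k : ℕ)) *
      ((-T j) ^ (m - 1 - (k : ℕ)) * T j) = 1 := by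
  set e : ℕ → K := esym Finset.univ (fun i => (T i)⁻¹) with he
  have hgen : ∑ r ∈ Finset.range (m + 1), e r * (-T j) ^ r = 0 := by
    have := esym_gen (Finset.univ : Finset (Fin m)) (fun i => (T i)⁻¹) (-T j)
    rw [Finset.card_univ, Fintype.card_fin] at this
    rw [this]
    refine Finset.prod_eq_zero (Finset.mem_univ j) ?_
    rw [neg_mul, ← div_eq_mul_inv, div_self (hT0 j)]; ring
  rw [Finset.sum_range_succ' _ m] at hgen
  have h0 : e 0 = 1 := by simp [he, esym]
  have hsum : ∑ r ∈ Finset.range m, e (r + 1) * (-T j) ^ r * (-T j) = -1 := by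
    have : ∀ r, e (r + 1) * (-T j) ^ (r + 1) = e (r + 1) * (-T j) ^ r * (-T j) := by
      intro r; ring
    simp_rw [← this]
    linear_combination hgen - h0
  rw [show (∑ k : Fin m, e (m - (k:ℕ)) * ((-T j) ^ (m - 1 - (k:ℕ)) * T j)) = ∑ k ∈ Finset.range m, e (m - k) * ((-T j) ^ (m - 1 - k) * T j) from Fin.sum_univ_eq_sum_range (fun k => e (m - k) * ((-T j) ^ (m - 1 - k) * T j)) m, ← Finset.sum_range_reflect]
  have : ∀ i ∈ Finset.range m,
      e (m - (m - 1 - i)) * ((-T j) ^ (m - 1 - (m - 1 - i)) * T j)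
        = -(e (i + 1) * (-T j) ^ i * (-T j)) := by
    intro i hi
    rw [Finset.mem_range] at hi
    have h1 : m - (m - 1 - i) = i + 1 := by omega
    have h2 : m - 1 - (m - 1 - i) = i := by omega
    rw [h1, h2]; ring
  rw [Finset.sum_congr rfl this, Finset.sum_neg_distrib, hsum]
  ring

/-- The distinguished element `Φ_μ = ∑_j (∏_{s≠j} (1 - T_j/T_s))⁻¹ • H_j`. -/
noncomputable def Phimu {K : Type*} [Field K] {V : Type*} [AddCommGroup V] [Module K V]
    (m : ℕ) (T : Fin m → K) (H : Fin m → V) : V :=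
  ∑ j, (∏ s ∈ Finset.univ.erase j, (1 - T j / T s))⁻¹ • H j

lemma pow_eig {K : Type*} [Field K] {V : Type*} [AddCommGroup V] [Module K V]
    {m : ℕ} {T : Fin m → K} {nabla : Module.End K V} {H : Fin m → V}
    (heig : ∀ i, nabla (H i) = T i • H i) (n : ℕ) (j : Fin m) :
    ((-nabla) ^ n) (H j) = ((-T j) ^ n) • H j := by
  induction n with
  | zero => simp
  | succ n ih =>
    rw [pow_succ']
    have h1 : ((-nabla) * (-nabla) ^ n) (H j) = (-nabla) (((-nabla) ^ n) (H j)) := rfl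
    rw [h1, ih, map_smul, LinearMap.neg_apply, heig, pow_succ']
    rw [smul_neg, ← neg_smul, smul_smul]
    ring_nf

/-- Theorem 3.2, second identity (3.37), of Bergeron–Garsia: with
`Φ⁽ᵏ⁾ := (-∇)^{m-k} Φ_μ` (here `k : Fin m` stands for the 1-indexed `k+1`),
`∇ ( ∑_{k=1}^m e_{m+1-k}(1/T_1, …, 1/T_m) • Φ⁽ᵏ⁾ ) = Φ_μ`. -/
theorem statement11 {K : Type*} [Field K] {V : Type*} [AddCommGroup V] [Module K V]
    (m : ℕ) (T : Fin m → K) (hT0 : ∀ i, T i ≠ 0) (hTinj : Function.Injective T)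
    (nabla : Module.End K V) (H : Fin m → V)
    (heig : ∀ i, nabla (H i) = T i • H i) :
    nabla (∑ k : Fin m, esym Finset.univ (fun i => (T i)⁻¹) (m - (k : ℕ)) •
        ((-nabla) ^ (m - 1 - (k : ℕ))) (Phimu m T H)) =
      Phimu m T H := by
  set c : Fin m → K := fun j => (∏ s ∈ Finset.univ.erase j, (1 - T j / T s))⁻¹ with hc
  have hpow : ∀ n : ℕ, ((-nabla) ^ n) (Phimu m T H) = ∑ j, (c j * (-T j) ^ n) • H j := by
    intro n
    rw [Phimu, map_sum]
    refine Finset.sum_congr rfl fun j _ => ?_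
    rw [map_smul, pow_eig heig, smul_smul]
  simp only [hpow, map_sum, map_smul, Finset.smul_sum, heig]
  rw [Finset.sum_comm]
  rw [Phimu]
  refine Finset.sum_congr rfl fun j _ => ?_
  simp_rw [smul_smul, ← Finset.sum_smul]
  congr 1
  calc ∑ k : Fin m, esym Finset.univ (fun i => (T i)⁻¹) (m - (k : ℕ)) *
        (c j * (-T j) ^ (m - 1 - (k : ℕ)) * T j)
      = c j * ∑ k : Fin m, esym Finset.univ (fun i => (T i)⁻¹) (m - (k : ℕ)) *
        ((-T j) ^ (m - 1 - (k : ℕ)) * T j) := by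
        rw [Finset.mul_sum]; exact Finset.sum_congr rfl fun k _ => by ring
    _ = c j := by rw [key m T hT0 j, mul_one]
end

section
/- Let K be a field, V a K-vector space, ∇ : V → V a K-linear map, T_1,…,T_m pairwise distinct nonzero elements of K, and H_1,…,H_m ∈ V with ∇H_i = T_i·H_i for each i. Set Φ_μ := Σ_{j=1}^{m} (∏_{s≠j}(1 − T_j/T_s))^{-1}·H_j. Let T_μ be a nonzero element of K, set x_i := T_μ/T_i for 1 ≤ i ≤ m, and let x_0, u_0, u_1, …, u_m ∈ K satisfy ∏_{s=0}^{m} x_s = ∏_{s=0}^{m} u_s. Then Σ_{i=1}^{m} x_i^{-1}·( ∏_{s=0}^{m}(u_s − x_i) )·( ∏_{1≤s≤m, s≠i}(x_s − x_i) )^{-1}·H_i = Σ_{k=1}^{m} T_μ^{-(m−k)}·( e_{m+1−k}(x_0,x_1,…,x_m) − e_{m+1−k}(u_0,u_1,…,u_m) )·(−∇)^{m−k}Φ_μ. -/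
open Finset

section Esym

variable {ι K : Type*} [DecidableEq ι] [CommRing K]

lemma esym_zero (s : Finset ι) (f : ι → K) : esym s f 0 = 1 := by
  simp [esym]

lemma esym_card (s : Finset ι) (f : ι → K) : esym s f #s = ∏ i ∈ s, f i := by
  rw [esym, powersetCard_self, sum_singleton]

lemma prod_sub_eq_sum_esym (s : Finset ι) (f : ι → K) (t : K) :
    ∏ i ∈ s, (f i - t) = ∑ r ∈ range (#s + 1), esym s f r * (-t) ^ (#s - r) := by
  simp_rw [sub_eq_add_neg]
  rw [prod_add, sum_powerset]
  refine sum_congr rfl fun r _ => ?_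
  rw [esym, sum_mul]
  refine sum_congr rfl fun A hA => ?_
  obtain ⟨hAs, hAc⟩ := mem_powersetCard.1 hA
  rw [prod_const, card_sdiff_of_subset hAs, hAc]

lemma prod_sub_eq_sum_esym_sub {n : ℕ} {s : Finset ι} (hs : #s = n + 1) {f g : ι → K}
    (hfg : ∏ i ∈ s, f i = ∏ i ∈ s, g i) {t : K} (ht : ∃ i ∈ s, f i = t) :
    ∏ i ∈ s, (g i - t) =
      ∑ k : Fin n, (esym s g (n - k) - esym s f (n - k)) * (-t) ^ ((k : ℕ) + 1) := by
  obtain ⟨i, hi, rfl⟩ := ht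
  have hf : ∏ j ∈ s, (f j - f i) = 0 := prod_eq_zero hi (sub_self _)
  have htop : esym s g (n + 1) = esym s f (n + 1) := by
    rw [← hs, esym_card, esym_card, hfg]
  rw [← sub_zero (∏ j ∈ s, (g j - f i)), ← hf, prod_sub_eq_sum_esym, prod_sub_eq_sum_esym,
    ← sum_sub_distrib, hs, sum_range_succ, sum_range_succ', htop, esym_zero, esym_zero,
    Fin.sum_univ_eq_sum_range (fun k => (esym s g (n - k) - esym s f (n - k)) * (-f i) ^ (k + 1)),
    ← sum_range_reflect]
  simp only [sub_self, add_zero, ← sub_mul]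
  refine sum_congr rfl fun k hkn => ?_
  have hk : k < n := mem_range.1 hkn
  rw [show n - 1 - k + 1 = n - k by omega, show n + 1 - (n - k) = k + 1 by omega]

end Esym

lemma pow_apply_of_apply_eq_smul {R M : Type*} [CommSemiring R] [AddCommMonoid M] [Module R M]
    {f : Module.End R M} {a : R} {v : M} (hv : f v = a • v) (r : ℕ) :
    (f ^ r) v = a ^ r • v := by
  induction r with
  | zero => simp
  | succ r ih => rw [pow_succ', Module.End.mul_apply, ih, map_smul, hv, smul_smul, pow_succ]

lemma neg_pow_apply_Phimu {K V : Type*} [Field K] [AddCommGroup V] [Module K V]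
    {m : ℕ} {T : Fin m → K} {nabla : Module.End K V} {H : Fin m → V}
    (heig : ∀ i, nabla (H i) = T i • H i) (r : ℕ) :
    ((-nabla) ^ r) (Phimu m T H) =
      ∑ j, ((-T j) ^ r * (∏ s ∈ univ.erase j, (1 - T j / T s))⁻¹) • H j := by
  have hneg : ∀ j, (-nabla) (H j) = (-T j) • H j := fun j => by
    rw [LinearMap.neg_apply, heig, neg_smul]
  simp only [Phimu, map_sum, map_smul, pow_apply_of_apply_eq_smul (hneg _), smul_smul, mul_comm]

lemma inv_pow_mul_neg_pow {K : Type*} [Field K] {a b : K} (ha : a ≠ 0) (hb : b ≠ 0)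
    {m k : ℕ} (hk : k < m) :
    (a ^ (m - 1 - k))⁻¹ * (-b) ^ (m - 1 - k) = ((-(a / b)) ^ m)⁻¹ * (-(a / b)) ^ (k + 1) := by
  have hx : -(a / b) ≠ 0 := neg_ne_zero.2 (div_ne_zero ha hb)
  obtain ⟨r, rfl⟩ : ∃ r, m = r + (k + 1) := ⟨m - (k + 1), by omega⟩
  rw [show r + (k + 1) - 1 - k = r by omega, pow_add, mul_inv, mul_assoc,
    inv_mul_cancel₀ (pow_ne_zero _ hx), mul_one, ← inv_pow, ← mul_pow, ← inv_pow]
  congr 1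
  field_simp

lemma inv_mul_inv_prod_div_sub_div {ι K : Type*} [Field K] (t : Finset ι) (T : ι → K)
    (a : K) {b : K} (hb : b ≠ 0) :
    (a / b)⁻¹ * (∏ s ∈ t, (a / T s - a / b))⁻¹ =
      -(∏ s ∈ t, (1 - b / T s))⁻¹ * ((-(a / b)) ^ (#t + 1))⁻¹ := by
  have hfactor : ∀ s ∈ t, a / T s - a / b = -(a / b) * (1 - b / T s) := fun s _ => by
    rw [mul_sub, mul_one, neg_mul, div_mul_div_cancel₀ hb]
    ring
  rw [prod_congr rfl hfactor, prod_mul_distrib, prod_const, pow_succ]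
  simp only [mul_inv, inv_neg]
  ring

/-- Here `k : Fin m` stands for the paper's 1-indexed `k + 1`. -/
theorem statement17_general {K : Type*} [Field K] {V : Type*} [AddCommGroup V] [Module K V]
    (m : ℕ) (T : Fin m → K) (hT0 : ∀ i, T i ≠ 0)
    (nabla : Module.End K V) (H : Fin m → V)
    (heig : ∀ i, nabla (H i) = T i • H i)
    (Tμ : K) (hTμ : Tμ ≠ 0)
    (x₀ u₀ : K) (u : Fin m → K)
    (hprod : x₀ * ∏ i, (Tμ / T i) = u₀ * ∏ i, u i) :
    ∑ i, ((Tμ / T i)⁻¹ * ((u₀ - Tμ / T i) * ∏ s, (u s - Tμ / T i)) *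
        (∏ s ∈ Finset.univ.erase i, (Tμ / T s - Tμ / T i))⁻¹) • H i =
      ∑ k : Fin m, ((Tμ ^ (m - 1 - (k : ℕ)))⁻¹ *
        (esym Finset.univ (Fin.cases x₀ (fun i => Tμ / T i) : Fin (m + 1) → K)
            (m - (k : ℕ)) -
         esym Finset.univ (Fin.cases u₀ u : Fin (m + 1) → K) (m - (k : ℕ)))) •
        ((-nabla) ^ (m - 1 - (k : ℕ))) (Phimu m T H) := by
  simp only [neg_pow_apply_Phimu heig, smul_sum, smul_smul]
  rw [sum_comm]
  refine sum_congr rfl fun j _ => ?_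
  rw [← sum_smul]
  congr 1
  have hexpand := prod_sub_eq_sum_esym_sub (s := univ) (card_fin (m + 1))
    (f := Fin.cases x₀ fun i => Tμ / T i) (g := Fin.cases u₀ u)
    (by simpa [Fin.prod_univ_succ] using hprod) ⟨j.succ, mem_univ _, rfl⟩
  simp only [Fin.prod_univ_succ, Fin.cases_zero, Fin.cases_succ] at hexpand
  set X : Fin (m + 1) → K := Fin.cases x₀ fun i => Tμ / T i
  set U : Fin (m + 1) → K := Fin.cases u₀ u
  set c := (∏ s ∈ univ.erase j, (1 - T j / T s))⁻¹
  have hterm : ∀ k : Fin m,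
      (Tμ ^ (m - 1 - (k : ℕ)))⁻¹ * (esym univ X (m - k) - esym univ U (m - k)) *
          ((-T j) ^ (m - 1 - (k : ℕ)) * c) =
        -(c * ((-(Tμ / T j)) ^ m)⁻¹) *
          ((esym univ U (m - k) - esym univ X (m - k)) * (-(Tμ / T j)) ^ ((k : ℕ) + 1)) :=
    fun k => by
      linear_combination (esym univ X (m - k) - esym univ U (m - k)) * c *
        inv_pow_mul_neg_pow hTμ (hT0 j) k.isLt
  rw [sum_congr rfl fun k _ => hterm k, ← mul_sum, ← hexpand, mul_right_comm,
    inv_mul_inv_prod_div_sub_div _ _ _ (hT0 j), card_erase_add_one (mem_univ j), card_fin]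
  ring

/-- Theorem 3.3 of Bergeron–Garsia (equivalence of 3.41 and 3.44): with
`x_i := T_μ/T_i` and corner weights satisfying `x_0 x_1 ⋯ x_m = u_0 u_1 ⋯ u_m`,
`∑_{i=1}^m x_i⁻¹ (∏_{s=0}^m (u_s - x_i)) (∏_{s≠i}(x_s - x_i))⁻¹ • H_i
 = ∑_{k=1}^m T_μ^{-(m-k)} (e_{m+1-k}(x_0,…,x_m) - e_{m+1-k}(u_0,…,u_m)) •
     (-∇)^{m-k} Φ_μ`
(here `k : Fin m` stands for the 1-indexed `k+1`). -/
theorem statement17 {K : Type*} [Field K] {V : Type*} [AddCommGroup V] [Module K V]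
    (m : ℕ) (T : Fin m → K) (hT0 : ∀ i, T i ≠ 0) (hTinj : Function.Injective T)
    (nabla : Module.End K V) (H : Fin m → V)
    (heig : ∀ i, nabla (H i) = T i • H i)
    (Tμ : K) (hTμ : Tμ ≠ 0)
    (x₀ u₀ : K) (u : Fin m → K)
    (hprod : x₀ * ∏ i, (Tμ / T i) = u₀ * ∏ i, u i) :
    ∑ i, ((Tμ / T i)⁻¹ * ((u₀ - Tμ / T i) * ∏ s, (u s - Tμ / T i)) *
        (∏ s ∈ Finset.univ.erase i, (Tμ / T s - Tμ / T i))⁻¹) • H i =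
      ∑ k : Fin m, ((Tμ ^ (m - 1 - (k : ℕ)))⁻¹ *
        (esym Finset.univ (Fin.cases x₀ (fun i => Tμ / T i) : Fin (m + 1) → K)
            (m - (k : ℕ)) -
         esym Finset.univ (Fin.cases u₀ u : Fin (m + 1) → K) (m - (k : ℕ)))) •
        ((-nabla) ^ (m - 1 - (k : ℕ))) (Phimu m T H) :=
  statement17_general m T hT0 nabla H heig Tμ hTμ x₀ u₀ u hprod
end
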